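/- arXiv:1712.08526 — 5 statements merged into one kernel-verified Lean document; each statement's English description precedes it below -/
import Mathlib

section
/- Let b be a monotone function on a complete lattice L and define t(x) = ⨅ { b_α | x ≤ b_α } using the final sequence of b. Then for every monotone function f : L → L, f ≤ t (pointwise) if and only if f(b_α) ≤ b_α for all ordinals α. -/
section InfAbove

variable {L ι : Type*} [CompleteLattice L]

theorem iInf_above_self_le (s : ι → L) (i : ι) : ⨅ (j) (_ : s i ≤ s j), s j ≤ s i :=
  iInf_le_of_le i (iInf_le _ le_rfl)

theorem le_iInf_above_of_map_le {f : L → L} (hf : Monotone f) {s : ι → L}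
    (h : ∀ i, f (s i) ≤ s i) (x : L) : f x ≤ ⨅ (i) (_ : x ≤ s i), s i :=
  le_iInf₂ fun i hx => (hf hx).trans (h i)

theorem Monotone.le_iInf_above_iff {f : L → L} (hf : Monotone f) (s : ι → L) :
    (∀ x, f x ≤ ⨅ (i) (_ : x ≤ s i), s i) ↔ ∀ i, f (s i) ≤ s i :=
  ⟨fun h i => (h (s i)).trans (iInf_above_self_le s i), le_iInf_above_of_map_le hf⟩

end InfAbove

theorem below_companion_iff_preserves_final_sequence_general {L : Type*} [CompleteLattice L]
    (s : Ordinal → L)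
    (t : L → L) (ht : ∀ x, t x = ⨅ (α : Ordinal) (_ : x ≤ s α), s α) :
    ∀ f : L → L, Monotone f → ((∀ x, f x ≤ t x) ↔ ∀ α : Ordinal, f (s α) ≤ s α) := by
  intro f hf
  simpa only [ht] using hf.le_iInf_above_iff s

theorem below_companion_iff_preserves_final_sequence {L : Type*} [CompleteLattice L]
    (b : L → L) (hb : Monotone b)
    (s : Ordinal → L) (h0 : s 0 = ⊤)
    (hsucc : ∀ α : Ordinal, s (α + 1) = b (s α))
    (hlim : ∀ α : Ordinal, Order.IsSuccLimit α → s α = ⨅ (β : Ordinal) (_ : β < α), s β)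
    (t : L → L) (ht : ∀ x, t x = ⨅ (α : Ordinal) (_ : x ≤ s α), s α) :
    ∀ f : L → L, Monotone f → ((∀ x, f x ≤ t x) ↔ ∀ α : Ordinal, f (s α) ≤ s α) :=
  below_companion_iff_preserves_final_sequence_general s t ht
end

section
/- Let b, f be monotone functions on a complete lattice L with f ∘ b ≤ b ∘ f (f is b-compatible). Then f(b_α) ≤ b_α for every ordinal α of the final sequence of b, and consequently f ≤ t where t is the companion of b. -/
/-! Transfinite induction along the final sequence: `f ⊤ ≤ ⊤` trivially; compatibility pushes
`f (b_α) ≤ b_α` to `f (b (b_α)) ≤ b (f (b_α)) ≤ b (b_α)`; and at a limit `f (b_λ) ≤ f (b_β) ≤ b_β`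
for every `β < λ`. Each `b_α` is thus a pre-fixed point of `f`, so monotonicity gives
`f x ≤ f (b_α) ≤ b_α` whenever `x ≤ b_α`, i.e. `f x ≤ t x`. -/

open Order

section CompleteLattice

variable {L : Type*} [CompleteLattice L]

theorem Monotone.map_le_biInf_of_map_le {ι : Sort*} {f : L → L} (hf : Monotone f) {s : ι → L}
    (hs : ∀ i, f (s i) ≤ s i) (x : L) : f x ≤ ⨅ (i) (_ : x ≤ s i), s i :=
  le_iInf₂ fun i hx => (hf hx).trans (hs i)

structure IsFinalSeq (b : L → L) (s : Ordinal → L) : Prop where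
  zero : s 0 = ⊤
  succ : ∀ α, s (α + 1) = b (s α)
  limit : ∀ α, IsSuccLimit α → s α = ⨅ (β : Ordinal) (_ : β < α), s β

namespace IsFinalSeq

variable {b f : L → L} {s : Ordinal → L}

theorem le_of_lt_of_isSuccLimit (hs : IsFinalSeq b s) {α β : Ordinal} (hα : IsSuccLimit α)
    (hβ : β < α) : s α ≤ s β :=
  (hs.limit α hα).trans_le (biInf_le _ hβ)

theorem map_le_of_compat (hs : IsFinalSeq b s) (hb : Monotone b) (hf : Monotone f)
    (hcompat : ∀ x, f (b x) ≤ b (f x)) (α : Ordinal) : f (s α) ≤ s α := by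
  induction α using Ordinal.limitRecOn with
  | zero => exact hs.zero ▸ le_top
  | add_one α ih =>
    rw [hs.succ]
    exact (hcompat _).trans (hb ih)
  | limit α hα ih =>
    refine (le_iInf₂ fun β hβ => ?_).trans_eq (hs.limit α hα).symm
    exact (hf (hs.le_of_lt_of_isSuccLimit hα hβ)).trans (ih β hβ)

end IsFinalSeq

end CompleteLattice

theorem compatible_below_companion {L : Type*} [CompleteLattice L]
    (b f : L → L) (hb : Monotone b) (hf : Monotone f)
    (hcompat : ∀ x : L, f (b x) ≤ b (f x))
    (s : Ordinal → L) (h0 : s 0 = ⊤)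
    (hsucc : ∀ α : Ordinal, s (α + 1) = b (s α))
    (hlim : ∀ α : Ordinal, Order.IsSuccLimit α → s α = ⨅ (β : Ordinal) (_ : β < α), s β)
    (t : L → L) (ht : ∀ x, t x = ⨅ (α : Ordinal) (_ : x ≤ s α), s α) :
    (∀ α : Ordinal, f (s α) ≤ s α) ∧ ∀ x : L, f x ≤ t x := by
  have hs : IsFinalSeq b s := ⟨h0, hsucc, hlim⟩
  have hpre := hs.map_le_of_compat hb hf hcompat
  exact ⟨hpre, fun x => (ht x).symm ▸ hf.map_le_biInf_of_map_le hpre x⟩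
end

section
/- On the complete lattice B_ω = ℕ ∪ {ω} (naturals extended with a top element ω, ordered as usual), a function f : B_ω → B_ω satisfies 'for all x, y and i ∈ ℕ: (x = y or i ≤ min(x,y)) implies (f(x) = f(y) or i ≤ min(f(x),f(y)))' if and only if it satisfies 'for all x, y: (x > f(x) and y > f(x)) implies f(x) = f(y)'. -/
theorem causal_iff_on_enat (f : ℕ∞ → ℕ∞) :
    (∀ (x y : ℕ∞) (i : ℕ), (x = y ∨ (i : ℕ∞) ≤ min x y) →
        (f x = f y ∨ (i : ℕ∞) ≤ min (f x) (f y))) ↔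
    (∀ x y : ℕ∞, (f x < x ∧ f x < y) → f x = f y) := by
  constructor
  · intro h x y ⟨hx, hy⟩
    have hne : f x ≠ ⊤ := (lt_of_lt_of_le hx le_top).ne
    obtain ⟨n, hn⟩ : ∃ n : ℕ, (n : ℕ∞) = f x := by
      obtain ⟨n, hn⟩ := WithTop.ne_top_iff_exists.mp hne
      exact ⟨n, by exact_mod_cast hn⟩
    have hx' : ((n : ℕ∞) + 1) ≤ x := Order.add_one_le_of_lt (by rw [hn]; exact hx)
    have hy' : ((n : ℕ∞) + 1) ≤ y := Order.add_one_le_of_lt (by rw [hn]; exact hy)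
    have hcase := h x y (n + 1) (Or.inr (le_min (by push_cast; exact hx') (by push_cast; exact hy')))
    rcases hcase with h1 | h1
    · exact h1
    · exfalso
      have := (le_min_iff.mp h1).1
      rw [← hn] at this
      exact absurd (by exact_mod_cast this : n + 1 ≤ n) (by omega)
  · intro h x y i hi
    rcases hi with rfl | hi
    · exact Or.inl rfl
    obtain ⟨hix, hiy⟩ := le_min_iff.mp hi
    rcases le_or_gt (i : ℕ∞) (f x) with h1 | h1
    · rcases le_or_gt (i : ℕ∞) (f y) with h2 | h2
      · exact Or.inr (le_min h1 h2)
      · exact Or.inl ((h y x ⟨lt_of_lt_of_le h2 hiy, lt_of_lt_of_le h2 hix⟩).symm)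
    · exact Or.inl (h x y ⟨lt_of_lt_of_le h1 hix, lt_of_lt_of_le h1 hiy⟩)
end

section
/- Let (T, τ) be the companion of an endofunctor B on a category C, i.e., the final object in the category whose objects are pairs (F, λ : FB ⟹ BF) and whose morphisms (F,λ) → (G,ρ) are natural transformations κ : F ⟹ G with ρ ∘ κB = Bκ ∘ λ. Then there exist unique natural transformations η : Id ⟹ T and μ : TT ⟹ T such that (T, η, μ) is a monad and τ is a distributive law of this monad over B (i.e., τ ∘ ηB = Bη and τ ∘ μB = Bμ ∘ τT ∘ Tτ). -/
open CategoryTheory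

/-- If `(T, τ)` is the companion of `B` (final distributive law), then there are unique
`η : 𝟭 C ⟶ T` and `μ : T ⋙ T ⟶ T` making `(T, η, μ)` a monad and `τ` a distributive law
of this monad over `B`. -/
theorem companion_is_monad {C : Type*} [Category C] (B T : C ⥤ C)
    (τ : B ⋙ T ⟶ T ⋙ B)
    (hfinal : ∀ (F : C ⥤ C) (lam : B ⋙ F ⟶ F ⋙ B),
      ∃! κ : F ⟶ T, ∀ X : C,
        κ.app (B.obj X) ≫ τ.app X = lam.app X ≫ B.map (κ.app X)) :
    ∃! p : (𝟭 C ⟶ T) × (T ⋙ T ⟶ T),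
      -- monad laws
      (∀ X : C, p.1.app (T.obj X) ≫ p.2.app X = 𝟙 (T.obj X)) ∧
      (∀ X : C, T.map (p.1.app X) ≫ p.2.app X = 𝟙 (T.obj X)) ∧
      (∀ X : C, p.2.app (T.obj X) ≫ p.2.app X = T.map (p.2.app X) ≫ p.2.app X) ∧
      -- τ is a distributive law of the monad (T, η, μ) over B
      (∀ X : C, p.1.app (B.obj X) ≫ τ.app X = B.map (p.1.app X)) ∧
      (∀ X : C, p.2.app (B.obj X) ≫ τ.app X
          = T.map (τ.app X) ≫ τ.app (T.obj X) ≫ B.map (p.2.app X)) := by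
  have τn : ∀ {A A' : C} (f : A ⟶ A'),
      T.map (B.map f) ≫ τ.app A' = τ.app A ≫ B.map (T.map f) := by
    intro A A' f; simpa using τ.naturality f
  -- η
  obtain ⟨η, hη, hηu⟩ := hfinal (𝟭 C)
    { app := fun X => 𝟙 (B.obj X)
      naturality := by intro X Y f; simp }
  have hη' : ∀ X : C, η.app (B.obj X) ≫ τ.app X = B.map (η.app X) := by
    intro X; simpa using hη X
  have ηn : ∀ {A A' : C} (f : A ⟶ A'), f ≫ η.app A' = η.app A ≫ T.map f := by
    intro A A' f; simpa using η.naturality f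
  -- μ
  obtain ⟨μ, hμ, hμu⟩ := hfinal (T ⋙ T)
    { app := fun X => T.map (τ.app X) ≫ τ.app (T.obj X)
      naturality := by
        intro X Y f
        simp only [Functor.comp_obj, Functor.comp_map]
        rw [← Functor.map_comp_assoc, τn f, Functor.map_comp_assoc,
          τn (A := T.obj X) (A' := T.obj Y) (T.map f), Category.assoc] }
  have hμ' : ∀ X : C, μ.app (B.obj X) ≫ τ.app X
      = T.map (τ.app X) ≫ τ.app (T.obj X) ≫ B.map (μ.app X) := by
    intro X; simpa using hμ X
  have μn : ∀ {A A' : C} (f : A ⟶ A'),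
      T.map (T.map f) ≫ μ.app A' = μ.app A ≫ T.map f := by
    intro A A' f; simpa using μ.naturality f
  -- any endo-morphism of (T, τ) is the identity
  obtain ⟨κT, hκT, hκTu⟩ := hfinal T τ
  have hid : ∀ κ : T ⟶ T,
      (∀ X : C, κ.app (B.obj X) ≫ τ.app X = τ.app X ≫ B.map (κ.app X)) → κ = 𝟙 T := by
    intro κ hκ
    have h1 : κ = κT := hκTu κ hκ
    have h2 : 𝟙 T = κT := hκTu (𝟙 T) (by intro X; simp)
    rw [h1, h2]
  -- left unit
  have hlu : (⟨fun X => η.app (T.obj X) ≫ μ.app X, by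
      intro X Y f
      rw [← Category.assoc, ηn (T.map f), Category.assoc,
        μn (A := X) (A' := Y) f, Category.assoc]⟩ : T ⟶ T) = 𝟙 T := by
    apply hid
    intro X
    simp only [NatTrans.comp_app, Category.assoc]
    rw [hμ' X, ← Category.assoc (η.app _),
      ← ηn (A := T.obj (B.obj X)) (A' := B.obj (T.obj X)) (τ.app X), Category.assoc,
      ← Category.assoc (η.app _), hη' (T.obj X), ← B.map_comp]
  -- right unit
  have hru : (⟨fun X => T.map (η.app X) ≫ μ.app X, by
      intro X Y f
      rw [← Category.assoc, ← T.map_comp, ηn f, T.map_comp, Category.assoc,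
        μn (A := X) (A' := Y) f, Category.assoc]⟩ : T ⟶ T) = 𝟙 T := by
    apply hid
    intro X
    simp only [Category.assoc]
    rw [hμ' X, ← Category.assoc (T.map _), ← T.map_comp, hη' X, ← Category.assoc,
      τn (A := X) (A' := T.obj X) (η.app X), Category.assoc, ← B.map_comp]
  -- associativity
  obtain ⟨κ₃, hκ₃, hκ₃u⟩ := hfinal (T ⋙ T ⋙ T)
    { app := fun X => T.map (T.map (τ.app X)) ≫ T.map (τ.app (T.obj X)) ≫ τ.app (T.obj (T.obj X))
      naturality := by
        intro X Y f
        simp only [Functor.comp_obj, Functor.comp_map]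
        rw [← Functor.map_comp_assoc, ← T.map_comp, τn f, T.map_comp, T.map_comp,
          Category.assoc, Category.assoc]
        rw [← Category.assoc (T.map (T.map (B.map (T.map f)))),
          ← T.map_comp, τn (A := T.obj X) (A' := T.obj Y) (T.map f), T.map_comp,
          Category.assoc, τn (A := T.obj (T.obj X)) (A' := T.obj (T.obj Y)) (T.map (T.map f))]
        simp }
  have hassoc : ∀ X : C, μ.app (T.obj X) ≫ μ.app X = T.map (μ.app X) ≫ μ.app X := by
    have e1 : (⟨fun X => μ.app (T.obj X) ≫ μ.app X, by
        intro X Y f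
        simp only [Functor.comp_obj, Functor.comp_map]
        rw [← Category.assoc, μn (A := T.obj X) (A' := T.obj Y) (T.map f), Category.assoc,
          μn (A := X) (A' := Y) f, Category.assoc]⟩ : T ⋙ T ⋙ T ⟶ T) = κ₃ := by
      apply hκ₃u
      intro X
      simp only [Category.assoc]
      rw [hμ' X, ← Category.assoc (μ.app _),
        ← μn (A := T.obj (B.obj X)) (A' := B.obj (T.obj X)) (τ.app X),
        Category.assoc, ← Category.assoc (μ.app _), hμ' (T.obj X)]
      simp
    have e2 : (⟨fun X => T.map (μ.app X) ≫ μ.app X, by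
        intro X Y f
        simp only [Functor.comp_obj, Functor.comp_map]
        rw [← Category.assoc, ← T.map_comp, μn (A := X) (A' := Y) f, T.map_comp,
          Category.assoc, μn (A := X) (A' := Y) f, Category.assoc]⟩ : T ⋙ T ⋙ T ⟶ T) = κ₃ := by
      apply hκ₃u
      intro X
      simp only [Category.assoc]
      rw [hμ' X, ← Category.assoc (T.map _), ← T.map_comp, hμ' X, T.map_comp, T.map_comp,
        Category.assoc, Category.assoc,
        ← Category.assoc (T.map (B.map _)),
        τn (A := T.obj (T.obj X)) (A' := T.obj X) (μ.app X)]
      simp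
    intro X
    exact congrArg (fun κ => NatTrans.app κ X) (e1.trans e2.symm)
  refine ⟨(η, μ), ⟨?_, ?_, hassoc, hη', hμ'⟩, ?_⟩
  · intro X; exact congrArg (fun κ => NatTrans.app κ X) hlu
  · intro X; exact congrArg (fun κ => NatTrans.app κ X) hru
  · rintro ⟨η', μ'⟩ ⟨-, -, -, h4, h5⟩
    have e1 : η' = η := by
      rw [hηu η' (by intro X; simpa using h4 X), hηu η (by intro X; simpa using hη' X)]
    have e2 : μ' = μ := by
      rw [hμu μ' (by intro X; simpa using h5 X), hμu μ (by intro X; simpa using hμ' X)]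
    simp [e1, e2]
end

section
/- Let B be an endofunctor on a category C with initial object 0, and let (T, τ) be the companion of B with associated monad structure (T, η, μ). Then the B-coalgebra (T0, τ₀ ∘ T!_{B0}) is a final B-coalgebra, where !_{B0} : 0 → B0 is the unique map from the initial object. -/
open CategoryTheory CategoryTheory.Limits

/-- If `C` has an initial object `0` and `(T, τ)` is the companion of `B` with its
associated monad structure `(T, η, μ)`, then the `B`-coalgebra
`(T0, τ₀ ∘ T!_{B0})` is a final `B`-coalgebra. -/
theorem companion_initial_final_coalgebra {C : Type*} [Category C] [HasInitial C]
    (B T : C ⥤ C) (τ : B ⋙ T ⟶ T ⋙ B)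
    (hfinal : ∀ (F : C ⥤ C) (lam : B ⋙ F ⟶ F ⋙ B),
      ∃! κ : F ⟶ T, ∀ X : C,
        κ.app (B.obj X) ≫ τ.app X = lam.app X ≫ B.map (κ.app X))
    (η : 𝟭 C ⟶ T) (μ : T ⋙ T ⟶ T)
    (hunit₁ : ∀ X : C, η.app (T.obj X) ≫ μ.app X = 𝟙 (T.obj X))
    (hunit₂ : ∀ X : C, T.map (η.app X) ≫ μ.app X = 𝟙 (T.obj X))
    (hassoc : ∀ X : C, μ.app (T.obj X) ≫ μ.app X = T.map (μ.app X) ≫ μ.app X)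
    (hdl₁ : ∀ X : C, η.app (B.obj X) ≫ τ.app X = B.map (η.app X))
    (hdl₂ : ∀ X : C, μ.app (B.obj X) ≫ τ.app X
        = T.map (τ.app X) ≫ τ.app (T.obj X) ≫ B.map (μ.app X)) :
    ∀ (X : C) (f : X ⟶ B.obj X),
      ∃! h : X ⟶ T.obj (⊥_ C),
        h ≫ (T.map (initial.to (B.obj (⊥_ C))) ≫ τ.app (⊥_ C)) = f ≫ B.map h := by
  intro X f
  -- apply finality to the constant functor at X, with lam componentwise f
  obtain ⟨κ, hκ, huniq⟩ := hfinal ((Functor.const C).obj X)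
    { app := fun Y => f
      naturality := by intros; simp }
  refine ⟨κ.app (⊥_ C), ?_, ?_⟩
  · have hnat := κ.naturality (initial.to (B.obj (⊥_ C)))
    simp only [Functor.const_obj_obj, Functor.const_obj_map, Category.id_comp] at hnat
    have := hκ (⊥_ C)
    simp only [Functor.const_obj_obj, NatTrans.app] at this
    show κ.app (⊥_ C) ≫ T.map (initial.to (B.obj (⊥_ C))) ≫ τ.app (⊥_ C) = f ≫ B.map (κ.app (⊥_ C))
    rw [← Category.assoc, ← hnat, this]
  · intro h heq
    have hcond : ∀ Y : C,
        (h ≫ T.map (initial.to (B.obj Y))) ≫ τ.app Y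
          = f ≫ B.map (h ≫ T.map (initial.to Y)) := by
      intro Y
      have h1 : initial.to (B.obj Y)
          = initial.to (B.obj (⊥_ C)) ≫ B.map (initial.to Y) := initial.hom_ext _ _
      have h2 := τ.naturality (initial.to Y)
      simp only [Functor.comp_obj, Functor.comp_map] at h2
      rw [h1, T.map_comp, Category.assoc, Category.assoc, h2, reassoc_of% heq, ← B.map_comp]
    have hκ'eq :
        ({ app := fun Y => h ≫ T.map (initial.to Y)
           naturality := by
             intro Y Z g
             have hg : initial.to Y ≫ g = initial.to Z := initial.hom_ext _ _
             simp [← T.map_comp, hg] } : ((Functor.const C).obj X) ⟶ T) = κ :=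
      huniq _ (fun Y => hcond Y)
    have hb := congrArg (fun n : ((Functor.const C).obj X) ⟶ T => n.app (⊥_ C)) hκ'eq
    simp only at hb
    rw [show initial.to (⊥_ C) = 𝟙 (⊥_ C) from initial.hom_ext _ _, T.map_id,
      Category.comp_id] at hb
    exact hb
end
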